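/- Let X ⊆ A^ℤ be a transitive subshift. Let C_X be the ℝ-vector space of letter-coboundaries on X, let F_X be the ℝ-vector space of maps ρ : A → ℝ that are constant on C for each C ∈ P_X^R, and let F_X^0 ⊆ F_X be the subspace of constant maps. For ρ ∈ F_X let c_ρ : A* → ℝ be the monoid morphism with c_ρ(a) = ρ(b) − ρ(a), where b is any letter with ab ∈ L(X) (this is well defined). Then the sequence 0 → F_X^0 → F_X → C_X → 0, where the first map is inclusion and the second is ρ ↦ c_ρ, is a short exact sequence of ℝ-vector spaces: ρ ↦ c_ρ is surjective and its kernel is exactly F_X^0. In particular, dim_ℝ C_X = r − 1, where r is the number of connected components of the extension graph Γ_X(ε) of the empty word. -/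

import Mathlib

open Filter Topology MeasureTheory

namespace SAdicPaper

variable {A B : Type*}

/-! ### Basic symbolic dynamics on the full shift `ℤ → A` -/

/-- The shift map `S` on the full shift. -/
def shift (x : ℤ → A) : ℤ → A := fun n => x (n + 1)

/-- The iterate `S^k` of the shift, for `k : ℤ`. -/
def shiftIter (k : ℤ) (x : ℤ → A) : ℤ → A := fun n => x (n + k)

/-- The finite word `x_i x_{i+1} ⋯ x_{i+l-1}`. -/
def window (x : ℤ → A) (i : ℤ) (l : ℕ) : List A :=
  (List.range l).map fun k => x (i + (k : ℤ))

/-- A subshift: a closed shift-invariant subset of the full shift. -/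
def IsSubshift [TopologicalSpace A] (X : Set (ℤ → A)) : Prop :=
  IsClosed X ∧ shift '' X = X

/-- The language of a set of bi-infinite sequences: all finite factors of its points. -/
def langOf (X : Set (ℤ → A)) : Set (List A) :=
  {w | ∃ x ∈ X, ∃ i : ℤ, w = window x i w.length}

/-- The (two-sided) orbit of a point under the shift. -/
def orbit (x : ℤ → A) : Set (ℤ → A) := Set.range fun k : ℤ => shiftIter k x

/-- A minimal subshift: nonempty and every orbit is dense. -/
def IsMinimalSubshift [TopologicalSpace A] (X : Set (ℤ → A)) : Prop :=
  IsSubshift X ∧ X.Nonempty ∧ ∀ x ∈ X, X ⊆ closure (orbit x)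

/-- A transitive subshift: some orbit is dense. -/
def IsTransitiveSubshift [TopologicalSpace A] (X : Set (ℤ → A)) : Prop :=
  IsSubshift X ∧ ∃ x ∈ X, X ⊆ closure (orbit x)

/-- `α` is a continuous additive eigenvalue of `(X, S)`: there is a continuous
`g : X → ℝ/ℤ` with `g (S x) = g x + α (mod ℤ)`. -/
def IsEigenvalue [TopologicalSpace A] (X : Set (ℤ → A)) (α : ℝ) : Prop :=
  ∃ g : (ℤ → A) → AddCircle (1 : ℝ), ContinuousOn g X ∧
    ∀ x ∈ X, g (shift x) = g x + (α : AddCircle (1 : ℝ))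

/-- `‖x‖`: distance from a real number to the nearest integer. -/
noncomputable def dnint (x : ℝ) : ℝ := |x - round x|

/-- `{x}`: the centered fractional part, the unique element of `[-1/2, 1/2)`
such that `x + {x}` is an integer. -/
noncomputable def cfrac (x : ℝ) : ℝ := (⌈x - 1 / 2⌉ : ℤ) - x

/-- The cylinder `[u] = {x ∈ X : x_{[0,|u|)} = u}`. -/
def cyl (X : Set (ℤ → A)) (u : List A) : Set (ℤ → A) :=
  {x ∈ X | window x 0 u.length = u}

/-- The factor complexity `p_X(n)`. -/
noncomputable def pcomplex (X : Set (ℤ → A)) (n : ℕ) : ℕ :=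
  Set.ncard {w : List A | w ∈ langOf X ∧ w.length = n}

/-! ### Letter-coboundaries -/

/-- The extension of a map `c : A → ℝ` to the monoid morphism `A* → (ℝ, +)`. -/
def wsum (c : A → ℝ) (w : List A) : ℝ := (w.map c).sum

/-- `w` is a return word to the letter `a` in `X`: `w ++ [a] ∈ L(X)` and `w ++ [a]`
contains exactly two occurrences of `a`, one as a prefix and one as a suffix. -/
def IsReturnWord (X : Set (ℤ → A)) (a : A) (w : List A) : Prop :=
  w ++ [a] ∈ langOf X ∧ w.head? = some a ∧
    ∀ (i : ℕ) (h : i < w.length), 0 < i → w.get ⟨i, h⟩ ≠ a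

/-- A letter-coboundary on `X` (identified with its values on letters):
a morphism `A* → (ℝ, +)` vanishing on all return words to letters. -/
def IsLetterCoboundary (X : Set (ℤ → A)) (c : A → ℝ) : Prop :=
  ∀ (a : A) (w : List A), IsReturnWord X a w → wsum c w = 0

/-- `w` is a return word to the (nonempty) word `u` in `X`. -/
def IsReturnWordTo (X : Set (ℤ → A)) (u w : List A) : Prop :=
  w ≠ [] ∧ (w ++ u) ∈ langOf X ∧ u <+: (w ++ u) ∧
    ∀ i : ℕ, ((w ++ u).drop i).take u.length = u → i + u.length ≤ (w ++ u).length →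
      i = 0 ∨ i = w.length

/-! ### Extension graphs -/

/-- Vertices of the extension graph of `w`: two copies of the alphabet, restricted to the
letters that extend `w` on the corresponding side. -/
def extVertex (X : Set (ℤ → A)) (w : List A) : A ⊕ A → Prop
  | Sum.inl a => (a :: w) ∈ langOf X
  | Sum.inr b => (w ++ [b]) ∈ langOf X

/-- The edge relation of the extension graph: `a_L — b_R` when `a w b ∈ L(X)`. -/
def extAdjRaw (X : Set (ℤ → A)) (w : List A) (u v : A ⊕ A) : Prop :=
  ∃ a b, u = Sum.inl a ∧ v = Sum.inr b ∧ (a :: (w ++ [b])) ∈ langOf X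

/-- The extension graph `Γ_X(w)` of a word `w` in `X`. -/
def extGraph (X : Set (ℤ → A)) (w : List A) :
    SimpleGraph {v : A ⊕ A // extVertex X w v} where
  Adj u v := extAdjRaw X w u.1 v.1 ∨ extAdjRaw X w v.1 u.1
  symm := ⟨fun u v h => Or.symm h⟩
  loopless := ⟨by
    rintro ⟨v, hv⟩ h
    rcases h with ⟨a, b, h1, h2, -⟩ | ⟨a, b, h1, h2, -⟩ <;> (rw [h1] at h2; simp at h2)⟩

/-- The total number of connected components of the extension graphs of all
words of length `m` in `L(X)`. -/
noncomputable def totalComponents (X : Set (ℤ → A)) (m : ℕ) : ℕ :=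
  Nat.card (Σ w : {w : List A // w ∈ langOf X ∧ w.length = m},
    (extGraph X w.1).ConnectedComponent)

/-! ### The vector space of letter-coboundaries -/

lemma wsum_zero (w : List A) : wsum (0 : A → ℝ) w = 0 := by
  induction w with
  | nil => rfl
  | cons a t ih => simp [wsum, List.map_cons, List.sum_cons] at ih ⊢; exact ih

lemma wsum_add (c d : A → ℝ) (w : List A) :
    wsum (c + d) w = wsum c w + wsum d w := by
  induction w with
  | nil => simp [wsum]
  | cons a t ih =>
      simp only [wsum, List.map_cons, List.sum_cons, Pi.add_apply] at ih ⊢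
      rw [ih]; ring

lemma wsum_smul (r : ℝ) (c : A → ℝ) (w : List A) :
    wsum (r • c) w = r * wsum c w := by
  induction w with
  | nil => simp [wsum]
  | cons a t ih =>
      simp only [wsum, List.map_cons, List.sum_cons, Pi.smul_apply, smul_eq_mul] at ih ⊢
      rw [ih]; ring

/-- The `ℝ`-vector space `C_X` of letter-coboundaries on `X`. -/
def cobSpace (X : Set (ℤ → A)) : Submodule ℝ (A → ℝ) where
  carrier := {c | IsLetterCoboundary X c}
  zero_mem' := fun _ w _ => wsum_zero w
  add_mem' := by
    intro c d hc hd a w hw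
    rw [wsum_add, hc a w hw, hd a w hw, add_zero]
  smul_mem' := by
    intro r c hc a w hw
    rw [wsum_smul, hc a w hw, mul_zero]

/-! ### Directive sequences -/

variable {Alph : ℕ → Type*}

/-- `seg τ n k = τ_{n,n+k} = τ_n ∘ τ_{n+1} ∘ ⋯ ∘ τ_{n+k-1}`, applied to a letter. -/
def seg (τ : ∀ n, Alph (n + 1) → List (Alph n)) (n : ℕ) :
    (k : ℕ) → Alph (n + k) → List (Alph n)
  | 0, a => [a]
  | k + 1, a => (τ (n + k) a).flatMap (seg τ n k)

/-- `toZero τ n = τ_{0,n}`, applied to a letter. -/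
def toZero (τ : ∀ n, Alph (n + 1) → List (Alph n)) :
    (n : ℕ) → Alph n → List (Alph 0)
  | 0, a => [a]
  | n + 1, a => (τ n a).flatMap (toZero τ n)

/-- The height `h_n(u) = |τ_{0,n}(u)|` (so `h_0(u) = |u|`). -/
def heightW (τ : ∀ n, Alph (n + 1) → List (Alph n)) (n : ℕ) (u : List (Alph n)) : ℕ :=
  (u.flatMap (toZero τ n)).length

/-- Every `τ_n` is a substitution: non-erasing and letter-onto. -/
def IsDirective (τ : ∀ n, Alph (n + 1) → List (Alph n)) : Prop :=
  ∀ n, (∀ a : Alph (n + 1), τ n a ≠ []) ∧ ∀ b : Alph n, ∃ a : Alph (n + 1), b ∈ τ n a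

/-- The level-`n` language `L^{(n)}_τ`: the words occurring in some `τ_{n,m}(a)`, `m > n`. -/
def levelLang (τ : ∀ n, Alph (n + 1) → List (Alph n)) (n : ℕ) : Set (List (Alph n)) :=
  {w | ∃ k : ℕ, 0 < k ∧ ∃ a : Alph (n + k), w <:+: seg τ n k a}

/-- The level-`n` subshift `X^{(n)}_τ`: the points all of whose factors lie in `L^{(n)}_τ`.
`X_τ = levelShift τ 0`. -/
def levelShift (τ : ∀ n, Alph (n + 1) → List (Alph n)) (n : ℕ) : Set (ℤ → Alph n) :=
  {x | ∀ (i : ℤ) (l : ℕ), window x i l ∈ levelLang τ n}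

/-- Primitivity of a directive sequence. -/
def IsPrimitiveSeq (τ : ∀ n, Alph (n + 1) → List (Alph n)) : Prop :=
  ∀ n, ∃ k, 0 < k ∧ ∀ (a : Alph (n + k)) (b : Alph n), b ∈ seg τ n k a

/-- Positivity of a directive sequence: every letter of `A_n` occurs in every `τ_n(b)`. -/
def IsPositiveSeq (τ : ∀ n, Alph (n + 1) → List (Alph n)) : Prop :=
  ∀ (n : ℕ) (b : Alph (n + 1)) (a : Alph n), a ∈ τ n b

/-- `y` is the image of the bi-infinite sequence `x` under the substitution `σ`,
aligned so that `σ(x_0)` starts at position `0`. -/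
def SubstPoint (σ : B → List A) (x : ℤ → B) (y : ℤ → A) : Prop :=
  ∀ m : ℕ,
    window y (-(∑ t ∈ Finset.range m, ((σ (x (-1 - (t : ℤ)))).length : ℤ)))
        ((window x (-(m : ℤ)) (2 * m + 1)).flatMap σ).length
      = (window x (-(m : ℤ)) (2 * m + 1)).flatMap σ

/-- The base `B_n(a) = {τ_{0,n}(x) : x ∈ X^{(n)}_τ, x_0 = a}` of the Kakutani–Rokhlin tower. -/
def baseSet (τ : ∀ n, Alph (n + 1) → List (Alph n)) (n : ℕ) (a : Alph n) :
    Set (ℤ → Alph 0) :=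
  {y | ∃ x ∈ levelShift τ n, x 0 = a ∧ SubstPoint (toZero τ n) x y}

/-- Recognizability: for every `n ≥ 1`, the sets `S^k B_n(a)`, `a ∈ A_n`,
`0 ≤ k < h_n(a)`, are pairwise disjoint. -/
def IsRecognizable (τ : ∀ n, Alph (n + 1) → List (Alph n)) : Prop :=
  ∀ n : ℕ, 1 ≤ n → ∀ (a a' : Alph n) (k k' : ℕ),
    k < heightW τ n [a] → k' < heightW τ n [a'] → ¬(a = a' ∧ k = k') →
    Disjoint (shiftIter (k : ℤ) '' baseSet τ n a) (shiftIter (k' : ℤ) '' baseSet τ n a')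

/-- `min_{a ∈ A_n} |τ_{0,n}(a)| → ∞`. -/
def IsEverywhereGrowing (τ : ∀ n, Alph (n + 1) → List (Alph n)) : Prop :=
  ∀ N : ℕ, ∃ M : ℕ, ∀ n, M ≤ n → ∀ a : Alph n, N ≤ (toZero τ n a).length

/-- Decisiveness of an everywhere growing directive sequence. -/
def IsDecisive (τ : ∀ n, Alph (n + 1) → List (Alph n)) : Prop :=
  IsEverywhereGrowing τ ∧
  ∀ n : ℕ, ∃ l r : Alph (n + 1) → Alph n,
    ∀ a b : Alph (n + 1), [a, b] ∈ langOf (levelShift τ (n + 1)) →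
      (τ n b).head? = some (r a) ∧ (τ n a).getLast? = some (l b)

/-- Unimodularity: every incidence matrix has determinant `±1`. -/
def IsUnimodularSeq [∀ n, Fintype (Alph n)] [∀ n, DecidableEq (Alph n)]
    (τ : ∀ n, Alph (n + 1) → List (Alph n)) : Prop :=
  ∀ n, ∃ e : Alph n ≃ Alph (n + 1),
    (Matrix.det (Matrix.of fun b a : Alph n => ((τ n (e a)).count b : ℤ))).natAbs = 1

/-! ### Single substitutions -/

/-- Iteration `τ^m` of a substitution on a single alphabet, applied to a letter. -/
def substPow (τ : A → List A) : ℕ → A → List A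
  | 0, a => [a]
  | k + 1, a => (τ a).flatMap (substPow τ k)

/-- The substitutive subshift `X_τ` generated by the constant directive sequence `(τ)`. -/
def substShift (τ : A → List A) : Set (ℤ → A) :=
  {x | ∀ (i : ℤ) (l : ℕ), ∃ m : ℕ, 1 ≤ m ∧ ∃ a : A, window x i l <:+: substPow τ m a}

/-- The incidence matrix of a substitution (with real entries). -/
def incMat [DecidableEq A] (τ : A → List A) : Matrix A A ℝ :=
  Matrix.of fun b a => ((τ a).count b : ℝ)

/-- A primitive substitution: some power of its incidence matrix is strictly positive. -/
def IsPrimitiveSubst [Fintype A] [DecidableEq A] (τ : A → List A) : Prop :=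
  ∃ k : ℕ, 0 < k ∧ ∀ b a : A, 0 < (incMat τ ^ k) b a

/-- Aperiodicity: `X_τ` contains no shift-periodic point. -/
def IsAperiodicSubst (τ : A → List A) : Prop :=
  ∀ x ∈ substShift τ, ∀ p : ℕ, 0 < p → shiftIter (p : ℤ) x ≠ x

/-- The stable space `V_{X_τ}` of row vectors `v` with `v M_τ^n → 0`. -/
def stableSpace [Fintype A] [DecidableEq A] (τ : A → List A) : Submodule ℝ (A → ℝ) where
  carrier := {v | Tendsto (fun n : ℕ => Matrix.vecMul v (incMat τ ^ n)) atTop (nhds 0)}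
  zero_mem' := by
    simp only [Set.mem_setOf_eq, Matrix.zero_vecMul]
    exact tendsto_const_nhds
  add_mem' := by
    intro u v hu hv
    have := hu.add hv
    simp only [Set.mem_setOf_eq] at *
    simpa [Matrix.add_vecMul] using this
  smul_mem' := by
    intro r v hv
    have := hv.const_smul r
    simp only [Set.mem_setOf_eq] at *
    simpa [Matrix.smul_vecMul] using this

/-- `X` is balanced on the letter `a`. -/
def IsBalancedOnLetter [DecidableEq A] (X : Set (ℤ → A)) (a : A) : Prop :=
  ∃ C : ℕ, 0 < C ∧ ∀ w ∈ langOf X, ∀ w' ∈ langOf X, w.length = w'.length →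
    |(w.count a : ℤ) - (w'.count a : ℤ)| ≤ (C : ℤ)

/-- `X` is balanced on letters. -/
def IsBalancedOnLetters [DecidableEq A] (X : Set (ℤ → A)) : Prop :=
  ∀ a : A, IsBalancedOnLetter X a

/-- A function `f : X → ℝ` is balanced on a (minimal) subshift `X`. -/
def IsBalancedFn (X : Set (ℤ → A)) (f : (ℤ → A) → ℝ) : Prop :=
  ∃ C : ℝ, 0 < C ∧ ∀ x ∈ X, ∀ y ∈ X, ∀ n : ℕ, 1 ≤ n →
    |∑ i ∈ Finset.range (n + 1), (f (shiftIter (i : ℤ) x) - f (shiftIter (i : ℤ) y))| ≤ C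

/-- `ρ : A → ℝ` is constant on each member of the partition `P_X^R` of `A` determined by
the right-hand sides of the connected components of the extension graph of the empty word. -/
def constOnRightComponents {A : Type*} (X : Set (ℤ → A)) (ρ : A → ℝ) : Prop :=
  ∀ (a b : A) (ha : extVertex X ([] : List A) (Sum.inr a))
    (hb : extVertex X ([] : List A) (Sum.inr b)),
    (extGraph X ([] : List A)).Reachable ⟨Sum.inr a, ha⟩ ⟨Sum.inr b, hb⟩ → ρ a = ρ b

/-!
A letter-coboundary `c` sums to zero over every factor `x_i ⋯ x_{i+k-1}` of a point of `X` with
`x_{i+k} = x_i`, since such a factor splits into return words. Along a point `x` with dense orbit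
the partial sums `g i` of `c` therefore depend only on the letter `x i`, and `ρ (x i) := g i`
satisfies `c a = ρ b - ρ a` for all `ab ∈ L(X)`. Any such `ρ` is constant on the right vertices
of each component of `Γ_X(ε)`, because `a_L ↦ ρ a + c a`, `b_R ↦ ρ b` is constant along
edges; conversely, for `ρ` constant on them, all right neighbours of `a_L` lie in one
component, so `c_ρ` is well defined. As `x` visits every letter, `ρ` is determined by `c` up
to a constant, and rank–nullity for `f ↦ c_{f ∘ rightComponent}` on the functions on
components gives the dimension.
-/

section Windows

lemma window_eq_map (x : ℤ → A) (i : ℤ) (l : ℕ) :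
    window x i l = (List.range l).map fun k : ℕ => x (i + k) := by
  simp only [window, List.pure_def, List.bind_eq_flatMap]
  rw [← List.map_eq_flatMap, List.map_map]
  rfl

lemma length_window (x : ℤ → A) (i : ℤ) (l : ℕ) : (window x i l).length = l := by
  simp [window_eq_map]

lemma window_add (x : ℤ → A) (i : ℤ) (l m : ℕ) :
    window x i (l + m) = window x i l ++ window x (i + l) m := by
  simp only [window_eq_map, List.range_add, List.map_append, List.map_map]
  congr 1
  refine List.map_congr_left fun k _ => ?_
  simp only [Function.comp_apply, Nat.cast_add, add_assoc]

lemma window_one (x : ℤ → A) (i : ℤ) : window x i 1 = [x i] := by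
  simp [window_eq_map]

lemma window_two (x : ℤ → A) (i : ℤ) : window x i 2 = [x i, x (i + 1)] := by
  simp [window_eq_map, List.range_succ]

lemma window_succ (x : ℤ → A) (i : ℤ) (l : ℕ) :
    window x i (l + 1) = window x i l ++ [x (i + l)] := by
  rw [window_add, window_one]

lemma window_succ' (x : ℤ → A) (i : ℤ) (l : ℕ) :
    window x i (l + 1) = x i :: window x (i + 1) l := by
  rw [add_comm l, window_add, window_one, Nat.cast_one]
  rfl

lemma getElem_window (x : ℤ → A) (i : ℤ) (l k : ℕ) (h : k < (window x i l).length) :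
    (window x i l)[k] = x (i + k) := by
  simp [window_eq_map]

lemma window_mem_langOf {X : Set (ℤ → A)} {x : ℤ → A} (hx : x ∈ X) (i : ℤ) (l : ℕ) :
    window x i l ∈ langOf X :=
  ⟨x, hx, i, by rw [length_window]⟩

lemma wsum_append (c : A → ℝ) (u v : List A) : wsum c (u ++ v) = wsum c u + wsum c v := by
  simp [wsum]

lemma exists_pair_mem_langOf {X : Set (ℤ → A)} {a : A} (ha : [a] ∈ langOf X) :
    ∃ b, [a, b] ∈ langOf X := by
  obtain ⟨y, hy, i, hyi⟩ := ha
  rw [List.length_singleton, window_one, List.singleton_inj] at hyi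
  exact ⟨y (i + 1), hyi ▸ window_two y i ▸ window_mem_langOf hy i 2⟩

end Windows

section DenseOrbit

variable [TopologicalSpace A] [DiscreteTopology A] {X : Set (ℤ → A)} {x : ℤ → A}

lemma exists_window_eq_of_subset_closure_orbit (hdense : X ⊆ closure (orbit x)) {w : List A}
    (hw : w ∈ langOf X) : ∃ j : ℤ, window x j w.length = w := by
  obtain ⟨y, hy, i, hwy⟩ := hw
  have hU : IsOpen ((Set.Ico i (i + w.length)).pi fun n => ({y n} : Set A)) :=
    isOpen_set_pi (Set.finite_Ico _ _) fun _ _ => isOpen_discrete _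
  obtain ⟨_, hz, k, rfl⟩ := mem_closure_iff.1 (hdense hy) _ hU fun _ _ => rfl
  refine ⟨i + k, ?_⟩
  rw [hwy, length_window, window_eq_map, window_eq_map]
  refine List.map_congr_left fun m hm => ?_
  have hm' : (m : ℤ) < w.length := by simpa using hm
  have := hz (i + m) ⟨by omega, by omega⟩
  simp only [shiftIter, Set.mem_singleton_iff] at this
  rw [← this, add_right_comm]

lemma exists_eq_of_subset_closure_orbit (hdense : X ⊆ closure (orbit x)) {a : A}
    (ha : [a] ∈ langOf X) : ∃ i, x i = a := by
  obtain ⟨i, hi⟩ := exists_window_eq_of_subset_closure_orbit hdense ha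
  rw [List.length_singleton, window_one, List.singleton_inj] at hi
  exact ⟨i, hi⟩

lemma exists_pair_eq_of_subset_closure_orbit (hdense : X ⊆ closure (orbit x)) {a b : A}
    (hab : [a, b] ∈ langOf X) : ∃ i, x i = a ∧ x (i + 1) = b := by
  obtain ⟨i, hi⟩ := exists_window_eq_of_subset_closure_orbit hdense hab
  rw [show [a, b].length = 2 from rfl, window_two] at hi
  simp only [List.cons.injEq, and_true] at hi
  exact ⟨i, hi⟩

end DenseOrbit

/-- `c = c_ρ` in the paper's notation, read off on the two-letter words of `X`. -/
def IsCoboundaryOf (X : Set (ℤ → A)) (ρ c : A → ℝ) : Prop :=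
  ∀ a b : A, [a, b] ∈ langOf X → c a = ρ b - ρ a

namespace IsCoboundaryOf

variable {X : Set (ℤ → A)} {ρ c : A → ℝ}

lemma wsum_window (h : IsCoboundaryOf X ρ c) {y : ℤ → A} (hy : y ∈ X) (i : ℤ) (k : ℕ) :
    wsum c (window y i k) = ρ (y (i + k)) - ρ (y i) := by
  induction k with
  | zero => simp [window, wsum]
  | succ k ih =>
    have hpair := h _ _ (window_two y (i + k) ▸ window_mem_langOf hy (i + k) 2)
    rw [window_succ, wsum_append, ih, Nat.cast_succ, ← add_assoc]
    simp only [wsum, List.map_singleton, List.sum_singleton] at hpair ⊢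
    linarith

lemma isLetterCoboundary (h : IsCoboundaryOf X ρ c) : IsLetterCoboundary X c := by
  rintro a w ⟨⟨y, hy, i, hwy⟩, hhead, -⟩
  rw [List.length_append, List.length_singleton, window_succ] at hwy
  obtain ⟨hw, hlast⟩ := List.append_inj hwy (length_window _ _ _).symm
  obtain ⟨k, hk⟩ : ∃ k, w.length = k + 1 :=
    Nat.exists_eq_succ_of_ne_zero fun h0 => by simp [List.length_eq_zero_iff.1 h0] at hhead
  rw [hw, hk, window_succ', List.head?_cons, Option.some_inj] at hhead
  rw [List.singleton_inj] at hlast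
  rw [hw, h.wsum_window hy, ← hlast, ← hhead, sub_self]

lemma constOnRightComponents (h : IsCoboundaryOf X ρ c) : constOnRightComponents X ρ := by
  intro a b ha hb hreach
  let φ : {v : A ⊕ A // extVertex X [] v} → ℝ :=
    fun v => Sum.elim (fun a => ρ a + c a) ρ v.1
  have hraw : ∀ u v, extAdjRaw X [] u.1 v.1 → φ u = φ v := by
    rintro ⟨_, _⟩ ⟨_, _⟩ ⟨a, b, rfl, rfl, hab⟩
    have := h a b (by simpa using hab)
    simp only [φ, Sum.elim_inl, Sum.elim_inr]
    linarith
  have hadj : ∀ u v, (extGraph X []).Adj u v → φ u = φ v := by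
    rintro u v (huv | hvu)
    exacts [hraw u v huv, (hraw v u hvu).symm]
  suffices ∀ u v, (extGraph X []).Walk u v → φ u = φ v from this _ _ hreach.some
  intro u v p
  induction p with
  | nil => rfl
  | cons huv _ ih => exact (hadj _ _ huv).trans ih

end IsCoboundaryOf

section Cocycle

variable {X : Set (ℤ → A)} {c : A → ℝ} {y : ℤ → A}

lemma isReturnWord_window (hy : y ∈ X) {i : ℤ} {k : ℕ} (hk : y (i + (k + 1 : ℕ)) = y i)
    (hret : ∀ j : ℕ, 0 < j → j < k + 1 → y (i + j) ≠ y i) :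
    IsReturnWord X (y i) (window y i (k + 1)) := by
  refine ⟨?_, by rw [window_succ']; rfl, fun j hj hj0 => ?_⟩
  · rw [← hk, ← window_succ]
    exact window_mem_langOf hy _ _
  · rw [List.get_eq_getElem, getElem_window]
    exact hret j hj0 (by simpa [length_window] using hj)

lemma IsLetterCoboundary.wsum_window_eq_zero (hc : IsLetterCoboundary X c) (hy : y ∈ X)
    (k : ℕ) (i : ℤ) (hk : y (i + k) = y i) : wsum c (window y i k) = 0 := by
  induction k using Nat.strong_induction_on generalizing i with
  | _ k ih =>
  by_cases hret : ∃ j : ℕ, 0 < j ∧ j < k ∧ y (i + j) = y i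
  · obtain ⟨j, hj0, hjk, hj⟩ := hret
    obtain ⟨m, rfl⟩ := Nat.exists_eq_add_of_le hjk.le
    have hm : y (i + j + m) = y (i + j) := by rw [add_assoc, ← Nat.cast_add, hk, hj]
    rw [window_add, wsum_append, ih j hjk i hj, ih m (by omega) (i + j) hm, add_zero]
  · push Not at hret
    rcases k with _ | k
    · simp [window_eq_map, wsum]
    · exact hc _ _ (isReturnWord_window hy hk hret)

/-- The cocycle `g` of `c` along `x` with `g 0 = 0`, see `partialSum_add_one`. -/
def partialSum (c : A → ℝ) (x : ℤ → A) (i : ℤ) : ℝ :=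
  wsum c (window x 0 i.toNat) - wsum c (window x i (-i).toNat)

lemma partialSum_add_one (c : A → ℝ) (x : ℤ → A) (i : ℤ) :
    partialSum c x (i + 1) = partialSum c x i + c (x i) := by
  rcases le_or_gt 0 i with hi | hi
  · rw [partialSum, partialSum, show (i + 1).toNat = i.toNat + 1 by omega, window_succ,
      show ((0 : ℤ) + (i.toNat : ℕ)) = i by omega, show (-(i + 1)).toNat = 0 by omega,
      show (-i).toNat = 0 by omega]
    simp [wsum, window_eq_map]
  · rw [partialSum, partialSum, show (i + 1).toNat = 0 by omega, show i.toNat = 0 by omega,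
      show (-i).toNat = (-(i + 1)).toNat + 1 by omega, window_succ']
    simp only [wsum, List.map_cons, List.sum_cons]
    ring

lemma partialSum_add_nat (c : A → ℝ) (x : ℤ → A) (i : ℤ) (k : ℕ) :
    partialSum c x (i + k) = partialSum c x i + wsum c (window x i k) := by
  induction k with
  | zero => simp [window_eq_map, wsum]
  | succ k ih =>
    rw [Nat.cast_succ, ← add_assoc, partialSum_add_one, ih, window_succ, wsum_append]
    simp [wsum, add_assoc]

lemma IsLetterCoboundary.partialSum_eq (hc : IsLetterCoboundary X c) (hy : y ∈ X) {i j : ℤ}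
    (h : y i = y j) : partialSum c y i = partialSum c y j := by
  wlog hij : i ≤ j generalizing i j
  · exact (this h.symm (le_of_not_ge hij)).symm
  obtain ⟨k, rfl⟩ := Int.le.dest hij
  rw [partialSum_add_nat, hc.wsum_window_eq_zero hy k i h.symm, add_zero]

lemma IsLetterCoboundary.exists_isCoboundaryOf [TopologicalSpace A] [DiscreteTopology A]
    (hX : IsTransitiveSubshift X) (hA : ∀ a : A, [a] ∈ langOf X)
    (hc : IsLetterCoboundary X c) : ∃ ρ, IsCoboundaryOf X ρ c := by
  obtain ⟨-, x, hx, hdense⟩ := hX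
  choose occ hocc using fun b => exists_eq_of_subset_closure_orbit hdense (hA b)
  have hρ (i : ℤ) : partialSum c x (occ (x i)) = partialSum c x i :=
    hc.partialSum_eq hx (hocc _)
  refine ⟨fun b => partialSum c x (occ b), fun a b hab => ?_⟩
  obtain ⟨i, rfl, rfl⟩ := exists_pair_eq_of_subset_closure_orbit hdense hab
  dsimp only
  rw [hρ, hρ, partialSum_add_one]
  ring

end Cocycle

section ExtensionGraph

variable {X : Set (ℤ → A)}

lemma extVertex_nil_inl (hA : ∀ a : A, [a] ∈ langOf X) (a : A) :
    extVertex X [] (Sum.inl a) :=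
  hA a

lemma extVertex_nil_inr (hA : ∀ a : A, [a] ∈ langOf X) (b : A) :
    extVertex X [] (Sum.inr b) := by
  simpa [extVertex] using hA b

lemma extGraph_nil_adj_of_pair_mem {a b : A} (hab : [a, b] ∈ langOf X)
    (ha : extVertex X [] (Sum.inl a)) (hb : extVertex X [] (Sum.inr b)) :
    (extGraph X []).Adj ⟨Sum.inl a, ha⟩ ⟨Sum.inr b, hb⟩ :=
  Or.inl ⟨a, b, rfl, rfl, by simpa using hab⟩

def rightComponent (hA : ∀ a : A, [a] ∈ langOf X) (b : A) :
    (extGraph X []).ConnectedComponent :=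
  (extGraph X []).connectedComponentMk ⟨Sum.inr b, extVertex_nil_inr hA b⟩

lemma rightComponent_eq_of_pair_mem (hA : ∀ a : A, [a] ∈ langOf X) {a b b' : A}
    (h : [a, b] ∈ langOf X) (h' : [a, b'] ∈ langOf X) :
    rightComponent hA b = rightComponent hA b' :=
  SimpleGraph.ConnectedComponent.sound <|
    (extGraph_nil_adj_of_pair_mem h (extVertex_nil_inl hA a) _).symm.reachable.trans
      (extGraph_nil_adj_of_pair_mem h' (extVertex_nil_inl hA a) _).reachable

lemma rightComponent_surjective (hA : ∀ a : A, [a] ∈ langOf X) :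
    Function.Surjective (rightComponent hA) := by
  intro K
  induction K using SimpleGraph.ConnectedComponent.ind with | h v => ?_
  obtain ⟨a | b, hv⟩ := v
  · obtain ⟨b, hab⟩ := exists_pair_mem_langOf (hA a)
    exact ⟨b, SimpleGraph.ConnectedComponent.sound
      (extGraph_nil_adj_of_pair_mem hab hv _).reachable.symm⟩
  · exact ⟨b, rfl⟩

lemma constOnRightComponents_iff_factorsThrough (hA : ∀ a : A, [a] ∈ langOf X)
    {ρ : A → ℝ} :
    constOnRightComponents X ρ ↔ ρ.FactorsThrough (rightComponent hA) :=
  ⟨fun h a b hab => h a b _ _ (SimpleGraph.ConnectedComponent.exact hab),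
    fun h _ _ _ _ hr => h (SimpleGraph.ConnectedComponent.sound hr)⟩

lemma isCoboundaryOf_of_constOnRightComponents (hA : ∀ a : A, [a] ∈ langOf X) {ρ : A → ℝ}
    (hρ : constOnRightComponents X ρ) {nb : A → A} (hnb : ∀ a, [a, nb a] ∈ langOf X) :
    IsCoboundaryOf X ρ fun a => ρ (nb a) - ρ a := fun a _ hab =>
  congrArg (· - ρ a) <| (constOnRightComponents_iff_factorsThrough hA).1 hρ
    (rightComponent_eq_of_pair_mem hA (hnb a) hab)

end ExtensionGraph

lemma isCoboundaryOf_zero_iff [TopologicalSpace A] [DiscreteTopology A] {X : Set (ℤ → A)}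
    (hX : IsTransitiveSubshift X) (hA : ∀ a : A, [a] ∈ langOf X) {ρ : A → ℝ} :
    IsCoboundaryOf X ρ 0 ↔ ∀ a b, ρ a = ρ b := by
  refine ⟨fun h a b => ?_, fun h a b _ => by rw [h b a, sub_self, Pi.zero_apply]⟩
  obtain ⟨-, x, hx, hdense⟩ := hX
  have hshift (i : ℤ) (k : ℕ) : ρ (x i) = ρ (x (i + k)) := by
    have := h.wsum_window hx i k
    rw [wsum_zero] at this
    linarith
  obtain ⟨i, rfl⟩ := exists_eq_of_subset_closure_orbit hdense (hA a)
  obtain ⟨j, rfl⟩ := exists_eq_of_subset_closure_orbit hdense (hA b)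
  rcases le_total i j with hij | hji
  · obtain ⟨k, rfl⟩ := Int.le.dest hij
    exact hshift i k
  · obtain ⟨k, rfl⟩ := Int.le.dest hji
    exact (hshift j k).symm

theorem finrank_cobSpace [Finite A] [TopologicalSpace A] [DiscreteTopology A]
    {X : Set (ℤ → A)} (hX : IsTransitiveSubshift X) (hA : ∀ a : A, [a] ∈ langOf X) :
    Module.finrank ℝ (cobSpace X)
      = Nat.card (extGraph X ([] : List A)).ConnectedComponent - 1 := by
  have : Fintype (extGraph X ([] : List A)).ConnectedComponent := Fintype.ofFinite _
  choose nb hnb using fun a => exists_pair_mem_langOf (hA a)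
  let Ψ : ((extGraph X []).ConnectedComponent → ℝ) →ₗ[ℝ] A → ℝ :=
    (LinearMap.funLeft ℝ ℝ nb - LinearMap.id) ∘ₗ
      LinearMap.funLeft ℝ ℝ (rightComponent hA)
  have hΨ (f) : IsCoboundaryOf X (f ∘ rightComponent hA) (Ψ f) :=
    isCoboundaryOf_of_constOnRightComponents hA
      ((constOnRightComponents_iff_factorsThrough hA).2 fun _ _ h => congrArg f h) hnb
  have hrange : LinearMap.range Ψ = cobSpace X := by
    ext c
    refine ⟨fun ⟨f, hf⟩ => hf ▸ (hΨ f).isLetterCoboundary, fun hc => ?_⟩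
    obtain ⟨ρ, hρ⟩ := IsLetterCoboundary.exists_isCoboundaryOf hX hA hc
    obtain ⟨f, rfl⟩ := (Function.factorsThrough_iff _).1 <|
      (constOnRightComponents_iff_factorsThrough hA).1 hρ.constOnRightComponents
    exact ⟨f, funext fun a => (hΨ f a (nb a) (hnb a)).trans (hρ a (nb a) (hnb a)).symm⟩
  have hker : LinearMap.ker Ψ = ℝ ∙ 1 := by
    ext f
    rw [LinearMap.mem_ker, Submodule.mem_span_singleton]
    refine ⟨fun h0 => ?_, ?_⟩
    · have hconst := (isCoboundaryOf_zero_iff hX hA).1 (h0 ▸ hΨ f)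
      obtain ⟨-, x, -⟩ := hX
      refine ⟨f (rightComponent hA (x 0)), funext fun K => ?_⟩
      obtain ⟨b, rfl⟩ := rightComponent_surjective hA K
      simpa using hconst (x 0) b
    · rintro ⟨r, rfl⟩
      ext a
      simp [Ψ]
  have hnonempty : Nonempty (extGraph X ([] : List A)).ConnectedComponent := by
    obtain ⟨-, x, -⟩ := hX
    exact ⟨rightComponent hA (x 0)⟩
  have := Ψ.finrank_range_add_finrank_ker
  rw [hrange, hker, finrank_span_singleton one_ne_zero, Module.finrank_fintype_fun_eq_card,
    ← Nat.card_eq_fintype_card] at this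
  omega

/-- **Theorem 3.7.** For a transitive subshift `X` (with every letter occurring), the
sequence `0 → F_X⁰ → F_X → C_X → 0`, with second map `ρ ↦ c_ρ`, is a short exact sequence
of `ℝ`-vector spaces: `ρ ↦ c_ρ` lands in `C_X` and is well defined, it is surjective, and
its kernel is exactly the constants.  In particular `dim_ℝ C_X = r − 1`, where `r` is the
number of connected components of `Γ_X(ε)`. -/
theorem coboundary_short_exact_sequence
    {A : Type*} [Fintype A] [TopologicalSpace A] [DiscreteTopology A]
    (X : Set (ℤ → A)) (hX : IsTransitiveSubshift X)
    (hA : ∀ a : A, [a] ∈ langOf X) :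
    (∀ ρ : A → ℝ, constOnRightComponents X ρ →
      ∃ c : A → ℝ, IsLetterCoboundary X c ∧
        ∀ a b : A, [a, b] ∈ langOf X → c a = ρ b - ρ a) ∧
    (∀ c : A → ℝ, IsLetterCoboundary X c →
      ∃ ρ : A → ℝ, constOnRightComponents X ρ ∧
        ∀ a b : A, [a, b] ∈ langOf X → c a = ρ b - ρ a) ∧
    (∀ ρ : A → ℝ, constOnRightComponents X ρ →
      ((∀ a b : A, [a, b] ∈ langOf X → ρ b - ρ a = 0) ↔ ∀ a b : A, ρ a = ρ b)) ∧
    Module.finrank ℝ ↥(cobSpace X)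
      = Nat.card (extGraph X ([] : List A)).ConnectedComponent - 1 := by
  choose nb hnb using fun a => exists_pair_mem_langOf (hA a)
  refine ⟨fun ρ hρ => ?_, fun c hc => ?_, fun ρ _ => ?_, finrank_cobSpace hX hA⟩
  · have h := isCoboundaryOf_of_constOnRightComponents hA hρ hnb
    exact ⟨_, h.isLetterCoboundary, h⟩
  · obtain ⟨ρ, hρ⟩ := hc.exists_isCoboundaryOf hX hA
    exact ⟨ρ, hρ.constOnRightComponents, hρ⟩
  · rw [← isCoboundaryOf_zero_iff hX hA]
    exact forall₃_congr fun _ _ _ => eq_comm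

end SAdicPaper
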